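/- arXiv:2202.09187 — 2 statements merged into one kernel-verified Lean document; each statement's English description precedes it below -/
import Mathlib

section
/- Let n ≥ 1. For all A, B, C ∈ O^±(n,n,ℤ), the vector m_{A,B,C}, which a priori lies in (1/2)·ℤ^{2n} ⊂ ℝ^{2n}, has integer entries: m_{A,B,C} ∈ ℤ^{2n}. -/
open Matrix

/-- Square integer matrices of size `2n`. -/
abbrev Mat (n : ℕ) := Matrix (Fin (n + n)) (Fin (n + n)) ℤ

/-- The `2n × 2n` block matrix `[[A, B], [C, D]]`. -/
def fromB {n : ℕ} (A B C D : Matrix (Fin n) (Fin n) ℤ) : Mat n :=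
  Matrix.reindex finSumFinEquiv finSumFinEquiv (Matrix.fromBlocks A B C D)

/-- The block matrix `I = [[0, Eₙ], [Eₙ, 0]]`. -/
def Imat (n : ℕ) : Mat n := fromB 0 1 1 0

/-- Membership in the integral split pseudo-orthogonal group `O^±(n,n,ℤ)`:
`Aᵀ I A = I` or `Aᵀ I A = -I`. -/
def IsOpm (n : ℕ) (A : Mat n) : Prop :=
  Aᵀ * Imat n * A = Imat n ∨ Aᵀ * Imat n * A = -Imat n

/-- The block matrix `J = [[0, 0], [Eₙ, 0]]`. -/
def Jmat (n : ℕ) : Mat n := fromB 0 0 1 0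

/-- The sign `iso(A) ∈ {1, -1}` with `Aᵀ I A = iso(A) • I` (for `A ∈ O^±(n,n,ℤ)`). -/
noncomputable def iso (n : ℕ) (A : Mat n) : ℤ :=
  if Aᵀ * Imat n * A = Imat n then 1 else -1

/-- For a (skew-symmetric) integer matrix `M`, its strictly lower triangular part
`M_low`, with `(M_low)ᵢⱼ = Mᵢⱼ` for `i > j` and `0` otherwise. -/
def lowm {N : ℕ} (M : Matrix (Fin N) (Fin N) ℤ) : Matrix (Fin N) (Fin N) ℤ :=
  Matrix.of fun i j => if j < i then M i j else 0

/-- The diagonal of a matrix, as a vector `M^{diag}`. -/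
def diagv {N : ℕ} (M : Matrix (Fin N) (Fin N) ℤ) : Fin N → ℤ := fun i => M i i

/-- The skew-symmetric matrix `B_A := iso(A)·J − Aᵀ J A`. -/
noncomputable def Bmat (n : ℕ) (A : Mat n) : Mat n := iso n A • Jmat n - Aᵀ * Jmat n * A

/-- The integer vector `-2·m_{A,B,C}`. -/
noncomputable def mint (n : ℕ) (A B C : Mat n) : Fin (n + n) → ℤ :=
  ((A⁻¹)ᵀ * (B⁻¹)ᵀ * (C⁻¹)ᵀ).mulVec
    (Cᵀ.mulVec (diagv (Bᵀ * lowm (Bmat n A) * B))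
      + diagv (Cᵀ * lowm (Bmat n (A * B)) * C)
      - iso n A • diagv (Cᵀ * lowm (Bmat n B) * C)
      - diagv (Cᵀ * Bᵀ * lowm (Bmat n A) * B * C))

/-- The 3-cocycle
`m_{A,B,C} := −(1/2)·(A⁻¹)ᵀ(B⁻¹)ᵀ(C⁻¹)ᵀ·( Cᵀ·(Bᵀ(B_A)_low B)^{diag} + (Cᵀ(B_{AB})_low C)^{diag}`
`− iso(A)·(Cᵀ(B_B)_low C)^{diag} − (CᵀBᵀ(B_A)_low B C)^{diag} )` as a vector in `ℝ^{2n}`. -/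
noncomputable def mvec (n : ℕ) (A B C : Mat n) : Fin (n + n) → ℝ :=
  fun i => -(1 / 2 : ℝ) * (mint n A B C i : ℝ)

/-! `mvec` is `-½` times the integer vector `mint`, so it suffices that `mint` is even, i.e. that
the bracketed vector vanishes in `ZMod 2`. Being skew-symmetric, `B_A = L - Lᵀ` with
`L = (B_A)_low`; modulo 2 this gives `Bᵀ B_A B = T + Tᵀ` for `T = Bᵀ L B`, and
`B_{AB} ≡ Bᵀ B_A B + B_B` since `iso ≡ 1`. The lower part of `T + Tᵀ` is `T` up to a transpose
and the diagonal of `T`, and conjugating a diagonal matrix by `C` contributes `Cᵀ T^{diag}` to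
the diagonal because `x² = x` in `ZMod 2`. So the four terms of the bracket cancel in pairs up to
`2 Cᵀ T^{diag} = 0`. -/

namespace Matrix

variable {ι R S : Type*}

section Conjugation

variable [Fintype ι]

theorem diag_conj_transpose [CommSemiring R] (Q X : Matrix ι ι R) :
    (Qᵀ * Xᵀ * Q).diag = (Qᵀ * X * Q).diag := by
  rw [← diag_transpose (Qᵀ * X * Q)]
  simp [transpose_mul, mul_assoc]

theorem diag_conj_diagonal_zmod_two [DecidableEq ι] (Q : Matrix ι ι (ZMod 2)) (d : ι → ZMod 2) :
    (Qᵀ * diagonal d * Q).diag = Qᵀ *ᵥ d := by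
  have hidem : ∀ a b : ZMod 2, a * b * a = a * b := by decide
  ext i
  rw [diag_apply, mul_apply]
  simp only [mul_diagonal, transpose_apply, hidem, mulVec, dotProduct]

end Conjugation

variable [LinearOrder ι]

def strictLower [Zero R] (M : Matrix ι ι R) : Matrix ι ι R :=
  of fun i j => if j < i then M i j else 0

theorem strictLower_add [AddZeroClass R] (M M' : Matrix ι ι R) :
    strictLower (M + M') = strictLower M + strictLower M' := by
  ext i j
  by_cases h : j < i <;> simp [strictLower, h]

theorem strictLower_map [Zero R] [Zero S] {f : R → S} (hf : f 0 = 0) (M : Matrix ι ι R) :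
    (strictLower M).map f = strictLower (M.map f) := by
  ext i j
  by_cases h : j < i <;> simp [strictLower, h, hf]

theorem strictLower_add_transpose_strictLower_transpose [AddGroup R] [DecidableEq ι]
    (T : Matrix ι ι R) : strictLower T + (strictLower Tᵀ)ᵀ = T - diagonal T.diag := by
  ext i j
  rcases lt_trichotomy j i with h | rfl | h
  · simp [strictLower, h, h.ne', not_lt_of_gt h]
  · simp [strictLower]
  · simp [strictLower, h, h.ne, not_lt_of_gt h]

theorem eq_strictLower_sub_transpose [AddGroup R] {M : Matrix ι ι R} (hM : Mᵀ = -M)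
    (hdiag : M.diag = 0) : M = strictLower M - (strictLower M)ᵀ := by
  ext i j
  rcases lt_trichotomy j i with h | rfl | h
  · simp [strictLower, h, not_lt_of_gt h]
  · simpa [strictLower] using congrFun hdiag _
  · have hji : M i j = -M j i := by simpa using congrFun (congrFun hM j) i
    simp [strictLower, h, not_lt_of_gt h, hji]

theorem strictLower_sub_transpose_map [AddGroup R] [AddGroup S] (f : R →+ S)
    {M : Matrix ι ι R} (hM : M = strictLower M - (strictLower M)ᵀ) :
    M.map f = strictLower (M.map f) - (strictLower (M.map f))ᵀ := by
  conv_lhs => rw [hM]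
  rw [Matrix.map_sub f (map_sub f), transpose_map, strictLower_map (map_zero f)]

variable [Fintype ι]

theorem diag_conj_strictLower_add_transpose_zmod_two (T Q : Matrix ι ι (ZMod 2)) :
    (Qᵀ * strictLower (T + Tᵀ) * Q).diag = (Qᵀ * T * Q).diag + Qᵀ *ᵥ T.diag := by
  classical
  have hsplit : strictLower T + (strictLower Tᵀ)ᵀ = T + diagonal T.diag := by
    rw [strictLower_add_transpose_strictLower_transpose]
    ext i j
    exact CharTwo.sub_eq_add _ _
  calc (Qᵀ * strictLower (T + Tᵀ) * Q).diag
      = (Qᵀ * strictLower T * Q).diag + (Qᵀ * (strictLower Tᵀ)ᵀ * Q).diag := by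
        rw [strictLower_add, mul_add, add_mul, diag_add, diag_conj_transpose]
    _ = (Qᵀ * (T + diagonal T.diag) * Q).diag := by
        rw [← hsplit, mul_add, add_mul, diag_add]
    _ = (Qᵀ * T * Q).diag + Qᵀ *ᵥ T.diag := by
        rw [mul_add, add_mul, diag_add, diag_conj_diagonal_zmod_two]

def cocycleBracket [CommRing R] (a : R) (SA SAB SB B C : Matrix ι ι R) : ι → R :=
  Cᵀ *ᵥ (Bᵀ * strictLower SA * B).diag + (Cᵀ * strictLower SAB * C).diag
    - a • (Cᵀ * strictLower SB * C).diag - (Cᵀ * Bᵀ * strictLower SA * B * C).diag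

theorem map_cocycleBracket [CommRing R] [CommRing S] (f : R →+* S) (a : R)
    (SA SAB SB B C : Matrix ι ι R) :
    f ∘ cocycleBracket a SA SAB SB B C
      = cocycleBracket (f a) (SA.map f) (SAB.map f) (SB.map f) (B.map f) (C.map f) := by
  have hdiag (M : Matrix ι ι R) (i : ι) : f (M.diag i) = (M.map f).diag i := rfl
  ext i
  simp only [cocycleBracket, Function.comp_apply, Pi.sub_apply, Pi.add_apply, Pi.smul_apply,
    smul_eq_mul, map_sub, map_add, map_mul, RingHom.map_mulVec, hdiag, ← diag_map,
    Matrix.map_mul, strictLower_map (map_zero f), transpose_map]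

theorem cocycleBracket_zmod_two_eq_zero {S : Matrix ι ι (ZMod 2)}
    (hS : S = strictLower S - (strictLower S)ᵀ) (SB B C : Matrix ι ι (ZMod 2)) :
    cocycleBracket 1 S (Bᵀ * S * B + SB) SB B C = 0 := by
  set T := Bᵀ * strictLower S * B
  have hS' : S = strictLower S + (strictLower S)ᵀ :=
    hS.trans (by ext i j; exact CharTwo.sub_eq_add _ _)
  have hconj : Bᵀ * S * B = T + Tᵀ := by
    conv_lhs => rw [hS']
    simp only [T, transpose_mul, transpose_transpose, mul_add, add_mul, mul_assoc]
  have hassoc : Cᵀ * Bᵀ * strictLower S * B * C = Cᵀ * T * C := by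
    simp only [T, mul_assoc]
  rw [cocycleBracket, hconj, strictLower_add, mul_add, add_mul, diag_add,
    diag_conj_strictLower_add_transpose_zmod_two, hassoc, one_smul]
  ext i
  simp only [Pi.sub_apply, Pi.add_apply, Pi.zero_apply]
  linear_combination CharTwo.add_self_eq_zero ((Cᵀ *ᵥ T.diag) i)

end Matrix

section SplitOrthogonal

variable {n : ℕ}

theorem iso_smul_Imat {A : Mat n} (hA : IsOpm n A) : Aᵀ * Imat n * A = iso n A • Imat n := by
  unfold iso
  split_ifs with h
  · rw [h, one_smul]
  · rw [neg_one_smul]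
    exact hA.resolve_left h

theorem Jmat_add_transpose (n : ℕ) : Jmat n + (Jmat n)ᵀ = Imat n := by
  ext i j
  simp only [Jmat, Imat, fromB, Matrix.add_apply, transpose_apply, reindex_apply, submatrix_apply]
  rcases finSumFinEquiv.symm i with a | a <;> rcases finSumFinEquiv.symm j with b | b <;>
    simp [one_apply, eq_comm]

theorem Bmat_transpose {A : Mat n} (hA : IsOpm n A) : (Bmat n A)ᵀ = -Bmat n A := by
  have hJt : (Jmat n)ᵀ = Imat n - Jmat n := eq_sub_of_add_eq' (Jmat_add_transpose n)
  calc (Bmat n A)ᵀ = iso n A • (Imat n - Jmat n) - (Aᵀ * Imat n * A - Aᵀ * Jmat n * A) := by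
        simp only [Bmat, transpose_sub, transpose_smul, transpose_mul, transpose_transpose, hJt,
          mul_sub, sub_mul, mul_assoc]
    _ = -Bmat n A := by
        rw [iso_smul_Imat hA, Bmat, smul_sub]
        abel

theorem Bmat_diag {A : Mat n} (hA : IsOpm n A) : (Bmat n A).diag = 0 := by
  ext i
  have h := congrFun (congrFun (Bmat_transpose hA) i) i
  simp only [transpose_apply, neg_apply] at h
  simp only [diag_apply, Pi.zero_apply]
  omega

theorem Bmat_eq_strictLower_sub_transpose {A : Mat n} (hA : IsOpm n A) :
    Bmat n A = strictLower (Bmat n A) - (strictLower (Bmat n A))ᵀ :=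
  eq_strictLower_sub_transpose (Bmat_transpose hA) (Bmat_diag hA)

theorem mint_eq_mulVec_cocycleBracket (A B C : Mat n) :
    mint n A B C = ((A⁻¹)ᵀ * (B⁻¹)ᵀ * (C⁻¹)ᵀ) *ᵥ
      cocycleBracket (iso n A) (Bmat n A) (Bmat n (A * B)) (Bmat n B) B C :=
  rfl

theorem iso_cast_zmod_two (A : Mat n) : Int.castRingHom (ZMod 2) (iso n A) = 1 := by
  unfold iso
  split_ifs <;> decide

theorem Bmat_map_zmod_two (X : Mat n) :
    (Bmat n X).map (Int.castRingHom (ZMod 2))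
      = (Jmat n).map (Int.castRingHom (ZMod 2))
        - (X.map (Int.castRingHom (ZMod 2)))ᵀ * (Jmat n).map (Int.castRingHom (ZMod 2))
          * X.map (Int.castRingHom (ZMod 2)) := by
  rw [← transpose_map, ← Matrix.map_mul, ← Matrix.map_mul]
  ext i j
  simp only [Bmat, map_apply, Matrix.sub_apply, Matrix.smul_apply, smul_eq_mul, map_sub, map_mul,
    iso_cast_zmod_two, one_mul]

theorem Bmat_mul_map_zmod_two (A B : Mat n) :
    (Bmat n (A * B)).map (Int.castRingHom (ZMod 2))
      = (B.map (Int.castRingHom (ZMod 2)))ᵀ * (Bmat n A).map (Int.castRingHom (ZMod 2))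
          * B.map (Int.castRingHom (ZMod 2))
        + (Bmat n B).map (Int.castRingHom (ZMod 2)) := by
  simp only [Bmat_map_zmod_two, Matrix.map_mul, transpose_mul]
  noncomm_ring

end SplitOrthogonal

theorem statement13_general (n : ℕ) (A B C : Mat n) (hA : IsOpm n A) :
    ∃ v : Fin (n + n) → ℤ, ∀ i, mvec n A B C i = (v i : ℝ) := by
  have hBmat : (Bmat n A).map (Int.castRingHom (ZMod 2))
      = strictLower ((Bmat n A).map (Int.castRingHom (ZMod 2)))
        - (strictLower ((Bmat n A).map (Int.castRingHom (ZMod 2))))ᵀ :=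
    strictLower_sub_transpose_map (Int.castRingHom (ZMod 2)).toAddMonoidHom
      (Bmat_eq_strictLower_sub_transpose hA)
  have hbracket : Int.castRingHom (ZMod 2) ∘
      cocycleBracket (iso n A) (Bmat n A) (Bmat n (A * B)) (Bmat n B) B C = 0 := by
    rw [map_cocycleBracket, iso_cast_zmod_two, Bmat_mul_map_zmod_two]
    exact cocycleBracket_zmod_two_eq_zero hBmat _ _ _
  have heven (i : Fin (n + n)) : (2 : ℤ) ∣ mint n A B C i := by
    refine (ZMod.intCast_zmod_eq_zero_iff_dvd _ 2).mp ?_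
    change Int.castRingHom (ZMod 2) (mint n A B C i) = 0
    rw [mint_eq_mulVec_cocycleBracket, RingHom.map_mulVec, hbracket,
      mulVec_zero, Pi.zero_apply]
  choose k hk using heven
  refine ⟨fun i => -k i, fun i => ?_⟩
  simp only [mvec, hk]
  push_cast
  ring

/-- For all `A, B, C ∈ O^±(n,n,ℤ)`, the vector `m_{A,B,C}`, a priori in
`(1/2)·ℤ^{2n} ⊂ ℝ^{2n}`, has integer entries: `m_{A,B,C} ∈ ℤ^{2n}`. -/
theorem statement13 (n : ℕ) (hn : 1 ≤ n) (A B C : Mat n)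
    (hA : IsOpm n A) (hB : IsOpm n B) (hC : IsOpm n C) :
    ∃ v : Fin (n + n) → ℤ, ∀ i, mvec n A B C i = (v i : ℝ) :=
  statement13_general n A B C hA
end

section
/- Let n ≥ 1. The family m_{A,B,C} is a 3-cocycle on O^±(n,n,ℤ) with values in ℤ^{2n} with respect to the action A·v := I·A·I·v: for all A, B, C, D ∈ O^±(n,n,ℤ) one has I·A·I·m_{B,C,D} − m_{AB,C,D} + m_{A,BC,D} − m_{A,B,CD} + m_{A,B,C} = 0 in ℝ^{2n}. -/
open Matrix

/- ## Auxiliary lemmas -/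

lemma Imat_mul_Imat (n : ℕ) : Imat n * Imat n = 1 := by
  unfold Imat fromB
  rw [Matrix.reindex_apply, Matrix.submatrix_mul_equiv, Matrix.fromBlocks_multiply]
  have : Matrix.fromBlocks (0 * 0 + 1 * 1) (0 * 1 + 1 * 0) (1 * 0 + 0 * 1) (1 * 1 + 0 * 0)
      = (1 : Matrix (Fin n ⊕ Fin n) (Fin n ⊕ Fin n) ℤ) := by
    simp [Matrix.fromBlocks_one]
  rw [this, Matrix.submatrix_one_equiv]

lemma isUnit_det_of_Opm {n : ℕ} {A : Mat n} (hA : IsOpm n A) : IsUnit A.det := by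
  have hI : IsUnit (Imat n).det :=
    Matrix.isUnit_det_of_right_inverse (B := Imat n) (Imat_mul_Imat n)
  have h2 : A.det * A.det * (Imat n).det = (Imat n).det := by
    rcases hA with h | h
    · have := congrArg Matrix.det h
      simp only [Matrix.det_mul, Matrix.det_transpose] at this
      linarith [this]
    · have := congrArg Matrix.det h
      simp only [Matrix.det_mul, Matrix.det_transpose, Matrix.det_neg,
        Fintype.card_fin] at this
      have he : (-1 : ℤ) ^ (n + n) = 1 := by
        rw [← two_mul, pow_mul]; norm_num
      rw [he, one_mul] at this
      linarith [this]
  have hne : (Imat n).det ≠ 0 := hI.ne_zero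
  have h3 : A.det * A.det = 1 := by
    have h4 : A.det * A.det * (Imat n).det = 1 * (Imat n).det := by linarith
    exact mul_right_cancel₀ hne h4
  exact IsUnit.of_mul_eq_one _ h3

lemma iso_spec {n : ℕ} {A : Mat n} (hA : IsOpm n A) :
    Aᵀ * Imat n * A = iso n A • Imat n := by
  by_cases h : Aᵀ * Imat n * A = Imat n
  · rw [iso, if_pos h, one_smul]; exact h
  · rw [iso, if_neg h, neg_smul, one_smul]
    rcases hA with h' | h'
    · exact absurd h' h
    · exact h'

lemma one_ne_neg_one (n : ℕ) (hn : 1 ≤ n) : (Imat n) ≠ -(Imat n) := by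
  intro h
  have h1 : (1 : Mat n) = -1 := by
    calc (1 : Mat n) = Imat n * Imat n := (Imat_mul_Imat n).symm
    _ = Imat n * (-(Imat n)) := by rw [← h]
    _ = -(Imat n * Imat n) := by rw [Matrix.mul_neg]
    _ = -1 := by rw [Imat_mul_Imat n]
  have i0 : Fin (n + n) := ⟨0, by omega⟩
  have h2 := congrFun (congrFun h1 i0) i0
  simp [Matrix.one_apply_eq] at h2

lemma iso_eq {n : ℕ} (hn : 1 ≤ n) {A : Mat n} {e : ℤ} (he : e = 1 ∨ e = -1)
    (h : Aᵀ * Imat n * A = e • Imat n) : iso n A = e := by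
  unfold iso
  rcases he with rfl | rfl
  · rw [one_smul] at h
    rw [if_pos h]
  · rw [neg_smul, one_smul] at h
    rw [if_neg]
    intro hc
    rw [hc] at h
    exact one_ne_neg_one n hn h
  
lemma iso_pm {n : ℕ} (A : Mat n) : iso n A = 1 ∨ iso n A = -1 := by
  unfold iso; split_ifs <;> simp

lemma iso_mul {n : ℕ} (hn : 1 ≤ n) {A B : Mat n} (hA : IsOpm n A) (hB : IsOpm n B) :
    iso n (A * B) = iso n A * iso n B := by
  have key : (A * B)ᵀ * Imat n * (A * B) = (iso n A * iso n B) • Imat n := by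
    rw [Matrix.transpose_mul]
    calc Bᵀ * Aᵀ * Imat n * (A * B) = Bᵀ * (Aᵀ * Imat n * A) * B := by
          noncomm_ring
    _ = Bᵀ * (iso n A • Imat n) * B := by rw [iso_spec hA]
    _ = iso n A • (Bᵀ * Imat n * B) := by
          rw [Matrix.mul_smul, Matrix.smul_mul]
    _ = iso n A • (iso n B • Imat n) := by rw [iso_spec hB]
    _ = (iso n A * iso n B) • Imat n := by rw [smul_smul]
  have hpm : iso n A * iso n B = 1 ∨ iso n A * iso n B = -1 := by
    rcases iso_pm A with h1 | h1 <;> rcases iso_pm B with h2 | h2 <;>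
      rw [h1, h2] <;> norm_num
  exact iso_eq hn hpm key

/-- The twisted action matrix `π(A) = iso(A) • (A⁻¹)ᵀ`. -/
noncomputable def Pm (n : ℕ) (A : Mat n) : Mat n := iso n A • (A⁻¹)ᵀ

lemma IAI_eq {n : ℕ} {A : Mat n} (hA : IsOpm n A) :
    Imat n * A * Imat n = Pm n A := by
  have hdet := isUnit_det_of_Opm hA
  have h1 : (A⁻¹)ᵀ * Aᵀ = 1 := by
    rw [← Matrix.transpose_mul, Matrix.mul_nonsing_inv A hdet, Matrix.transpose_one]
  have h2 : (A⁻¹)ᵀ * (Aᵀ * Imat n * A) = Imat n * A := by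
    calc (A⁻¹)ᵀ * (Aᵀ * Imat n * A) = ((A⁻¹)ᵀ * Aᵀ) * Imat n * A := by noncomm_ring
    _ = Imat n * A := by rw [h1, one_mul]
  rw [iso_spec hA] at h2
  calc Imat n * A * Imat n = ((A⁻¹)ᵀ * (iso n A • Imat n)) * Imat n := by rw [h2]
  _ = iso n A • ((A⁻¹)ᵀ * (Imat n * Imat n)) := by
        rw [Matrix.mul_smul, Matrix.smul_mul, mul_assoc]
  _ = Pm n A := by rw [Imat_mul_Imat n, mul_one, Pm]

lemma Pm_mul {n : ℕ} (hn : 1 ≤ n) {A B : Mat n} (hA : IsOpm n A) (hB : IsOpm n B) :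
    Pm n (A * B) = Pm n A * Pm n B := by
  unfold Pm
  rw [iso_mul hn hA hB, Matrix.mul_inv_rev, Matrix.transpose_mul,
    Matrix.smul_mul, Matrix.mul_smul, smul_smul]

/-- The 2-cochain `s(X,Y) = ((XY)⁻¹)ᵀ · diag(Yᵀ (B_X)_low Y)`. -/
noncomputable def sv (n : ℕ) (X Y : Mat n) : Fin (n + n) → ℤ :=
  (((X * Y)⁻¹)ᵀ).mulVec (diagv (Yᵀ * lowm (Bmat n X) * Y))

lemma mint_eq_coboundary {n : ℕ} {A B C : Mat n} (hC : IsUnit C.det) :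
    mint n A B C =
      sv n A B + sv n (A * B) C - (Pm n A).mulVec (sv n B C) - sv n A (B * C) := by
  have hCt : (C⁻¹)ᵀ * Cᵀ = 1 := by
    rw [← Matrix.transpose_mul, Matrix.mul_nonsing_inv C hC, Matrix.transpose_one]
  unfold mint sv Pm
  simp only [Matrix.mulVec_sub, Matrix.mulVec_add, Matrix.mulVec_smul,
    Matrix.smul_mulVec, Matrix.mulVec_mulVec, Matrix.mul_inv_rev,
    Matrix.transpose_mul, Matrix.smul_mul, mul_assoc, hCt, mul_one]

/-- The family `m_{A,B,C}` is a 3-cocycle on `O^±(n,n,ℤ)` with values in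
`ℤ^{2n}` w.r.t. the action `A·v := I·A·I·v`: for all `A, B, C, D ∈ O^±(n,n,ℤ)`,
`I·A·I·m_{B,C,D} − m_{AB,C,D} + m_{A,BC,D} − m_{A,B,CD} + m_{A,B,C} = 0` in `ℝ^{2n}`. -/
theorem statement14 (n : ℕ) (hn : 1 ≤ n) (A B C D : Mat n)
    (hA : IsOpm n A) (hB : IsOpm n B) (hC : IsOpm n C) (hD : IsOpm n D) :
    ((Imat n * A * Imat n).map (Int.cast : ℤ → ℝ)).mulVec (mvec n B C D)
        - mvec n (A * B) C D + mvec n A (B * C) D - mvec n A B (C * D)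
        + mvec n A B C = 0 := by
  have dC := isUnit_det_of_Opm hC
  have dD := isUnit_det_of_Opm hD
  have dCD : IsUnit (C * D).det := by rw [Matrix.det_mul]; exact dC.mul dD
  -- the integer-level cocycle identity
  have intid : (Pm n A).mulVec (mint n B C D) - mint n (A * B) C D
      + mint n A (B * C) D - mint n A B (C * D) + mint n A B C = 0 := by
    rw [mint_eq_coboundary dD, mint_eq_coboundary dD, mint_eq_coboundary dD,
      mint_eq_coboundary dCD, mint_eq_coboundary dC, Pm_mul hn hA hB]
    simp only [Matrix.mulVec_add, Matrix.mulVec_sub, ← Matrix.mulVec_mulVec, mul_assoc]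
    abel
  funext i
  have h0 := congrFun intid i
  simp only [Pi.add_apply, Pi.sub_apply, Pi.zero_apply] at h0
  have h0' : (((Pm n A).mulVec (mint n B C D) i : ℤ) : ℝ)
      - (mint n (A * B) C D i : ℝ) + (mint n A (B * C) D i : ℝ)
      - (mint n A B (C * D) i : ℝ) + (mint n A B C i : ℝ) = 0 := by
    exact_mod_cast congrArg (Int.cast : ℤ → ℝ) h0
  have hcast : ((Imat n * A * Imat n).map (Int.cast : ℤ → ℝ)).mulVec (mvec n B C D) i
      = -(1 / 2 : ℝ) * (((Pm n A).mulVec (mint n B C D) i : ℤ) : ℝ) := by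
    rw [IAI_eq hA]
    simp only [Matrix.mulVec, dotProduct, Matrix.map_apply, mvec]
    push_cast
    rw [Finset.mul_sum]
    exact Finset.sum_congr rfl fun j _ => by ring
  simp only [Pi.add_apply, Pi.sub_apply, Pi.zero_apply, hcast, mvec]
  linarith [h0']
end
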